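/- arXiv:2208.00910 — 2 statements merged into one kernel-verified Lean document; each statement's English description precedes it below -/
import Mathlib

section
/- Let F^+ and F^- be complex numbers with 0 < F^± < 1 satisfying the system F^± = (1 + q_± F^+ F^-)/(q_± + 1) for given reals q_+, q_- > 1. Then F^± = (q_∓ + 1)/((q_± + 1) q_∓). -/
/-- If `0 < F⁺, F⁻ < 1` satisfy `F^± = (1 + q_± F⁺F⁻)/(q_± + 1)` with `q_+, q_- > 1`,
then `F^± = (q_∓ + 1)/((q_± + 1) q_∓)`. -/
theorem hitting_probabilities_semihomogeneous
    (qp qm Fp Fm : ℝ) (hqp : 1 < qp) (hqm : 1 < qm)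
    (hFp0 : 0 < Fp) (hFp1 : Fp < 1) (hFm0 : 0 < Fm) (hFm1 : Fm < 1)
    (heqp : Fp = (1 + qp * Fp * Fm) / (qp + 1))
    (heqm : Fm = (1 + qm * Fp * Fm) / (qm + 1)) :
    Fp = (qm + 1) / ((qp + 1) * qm) ∧ Fm = (qp + 1) / ((qm + 1) * qp) := by
  have hqp0 : qp + 1 ≠ 0 := by nlinarith
  have hqm0 : qm + 1 ≠ 0 := by nlinarith
  have h1 : Fp * (qp + 1) = 1 + qp * Fp * Fm := by
    field_simp at heqp; linarith [heqp]
  have h2 : Fm * (qm + 1) = 1 + qm * Fp * Fm := by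
    field_simp at heqm; linarith [heqm]
  have hfact : (qp * qm * (Fp * Fm) - 1) * (Fp * Fm - 1) = 0 := by
    linear_combination (-(Fm * (qm + 1))) * h1 + (-(1 + qp * Fp * Fm)) * h2
  have hPlt : Fp * Fm < 1 := by nlinarith
  have hP : qp * qm * (Fp * Fm) = 1 := by
    rcases mul_eq_zero.mp hfact with h | h
    · linarith
    · linarith
  constructor
  · field_simp
    nlinarith [hP, h1]
  · field_simp
    nlinarith [hP, h2]
end

section
/- Let f : ℕ → ℂ satisfy the order-4 linear recurrence f(n) - (Λ - q_+ - q_-) f(n+2) + q_+ q_- f(n+4) = 0 for all n, where Λ = (q_+ + 1)(q_- + 1)γ², together with the initial conditions f(0) = 1, f(1) = γ, f(2) = ((q_- + 1)γ² - 1)/q_-, f(3) = ((q_+ + 1)(q_- + 1)(γ² - 1)/(q_+ q_-) + 1)·γ. Then f satisfies the step-1 recurrence γ f(0) = f(1), γ f(n) = (q_- f(n+1) + f(n-1))/(q_- + 1) for odd n, and γ f(n) = (q_+ f(n+1) + f(n-1))/(q_+ + 1) for even n > 0; conversely, every solution of the step-1 recurrence with f(0) = 1 satisfies the order-4 recurrence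 and the given initial conditions. -/
/-- Equivalence between the order-4 recurrence (with its four initial conditions) and
the step-1 radial eigenfunction recurrence (with `f 0 = 1`) on the semi-homogeneous
tree rooted at a vertex of degree `q_+ + 1`. -/
theorem order4_recurrence_iff_step1 (qp qm : ℝ) (hqp : 1 < qp) (hqm : 1 < qm)
    (γ : ℂ) (f : ℕ → ℂ) :
    ((∀ n : ℕ, f n - (((qp + 1) * (qm + 1) * γ ^ 2) - (qp : ℂ) - qm) * f (n + 2) +
          (qp : ℂ) * qm * f (n + 4) = 0) ∧
        f 0 = 1 ∧ f 1 = γ ∧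
        f 2 = (((qm : ℂ) + 1) * γ ^ 2 - 1) / qm ∧
        f 3 = ((((qp : ℂ) + 1) * ((qm : ℂ) + 1) * (γ ^ 2 - 1)) / ((qp : ℂ) * qm) + 1) * γ) ↔
      (f 0 = 1 ∧ γ * f 0 = f 1 ∧
        (∀ n : ℕ, Odd n → γ * f n = ((qm : ℂ) * f (n + 1) + f (n - 1)) / ((qm : ℂ) + 1)) ∧
        (∀ n : ℕ, Even n → 0 < n →
          γ * f n = ((qp : ℂ) * f (n + 1) + f (n - 1)) / ((qp : ℂ) + 1))) := by
  have hqp0 : (qp : ℂ) ≠ 0 := Complex.ofReal_ne_zero.mpr (by linarith)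
  have hqm0 : (qm : ℂ) ≠ 0 := Complex.ofReal_ne_zero.mpr (by linarith)
  have hqp1 : (qp : ℂ) + 1 ≠ 0 := by
    have : ((qp + 1 : ℝ) : ℂ) ≠ 0 := Complex.ofReal_ne_zero.mpr (by linarith)
    push_cast at this; exact this
  have hqm1 : (qm : ℂ) + 1 ≠ 0 := by
    have : ((qm + 1 : ℝ) : ℂ) ≠ 0 := Complex.ofReal_ne_zero.mpr (by linarith)
    push_cast at this; exact this
  constructor
  · rintro ⟨hrec, h0, h1, h2, h3⟩
    have key : ∀ k : ℕ,
        γ * f (2 * k + 1) = ((qm : ℂ) * f (2 * k + 2) + f (2 * k)) / ((qm : ℂ) + 1) ∧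
        γ * f (2 * k + 2) = ((qp : ℂ) * f (2 * k + 3) + f (2 * k + 1)) / ((qp : ℂ) + 1) := by
      intro k
      induction k with
      | zero =>
        norm_num
        rw [h0, h1, h2, h3]
        constructor
        · field_simp; ring
        · field_simp; ring
      | succ k ih =>
        have e1 := hrec (2 * k)
        have e2 := hrec (2 * k + 1)
        simp only [show 2 * k + 1 + 2 = 2 * k + 3 from by ring,
          show 2 * k + 1 + 4 = 2 * k + 5 from by ring] at e2
        have ih1 := ih.1
        have ih2 := ih.2
        rw [eq_div_iff hqm1] at ih1
        rw [eq_div_iff hqp1] at ih2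
        have s1 : γ * f (2 * k + 3) = ((qm : ℂ) * f (2 * k + 4) + f (2 * k + 2)) / ((qm : ℂ) + 1) := by
          rw [eq_div_iff hqm1]
          apply mul_left_cancel₀ hqp0
          linear_combination -e1 - ih1 - ((qm : ℂ) + 1) * γ * ih2
        have s1' := s1
        rw [eq_div_iff hqm1] at s1'
        have s2 : γ * f (2 * k + 4) = ((qp : ℂ) * f (2 * k + 5) + f (2 * k + 3)) / ((qp : ℂ) + 1) := by
          rw [eq_div_iff hqp1]
          apply mul_left_cancel₀ hqm0
          linear_combination -e2 - ih2 - ((qp : ℂ) + 1) * γ * s1'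
        constructor
        · rw [show 2 * (k + 1) + 1 = 2 * k + 3 from by ring,
            show 2 * (k + 1) + 2 = 2 * k + 4 from by ring,
            show 2 * (k + 1) = 2 * k + 2 from by ring]
          exact s1
        · rw [show 2 * (k + 1) + 2 = 2 * k + 4 from by ring,
            show 2 * (k + 1) + 3 = 2 * k + 5 from by ring,
            show 2 * (k + 1) + 1 = 2 * k + 3 from by ring]
          exact s2
    refine ⟨h0, by rw [h0, h1, mul_one], ?_, ?_⟩
    · intro n hn
      obtain ⟨k, rfl⟩ := hn
      exact (key k).1
    · intro n hn hpos
      obtain ⟨k, rfl⟩ := hn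
      obtain ⟨j, rfl⟩ : ∃ j, k = j + 1 := ⟨k - 1, by omega⟩
      rw [show j + 1 + (j + 1) = 2 * j + 2 from by ring]
      exact (key j).2
  · rintro ⟨h0, h01, hodd, heven⟩
    have hf1 : f 1 = γ := by rw [← h01, h0, mul_one]
    have e1 := hodd 1 odd_one
    norm_num [h0, hf1] at e1
    have hf2 : f 2 = (((qm : ℂ) + 1) * γ ^ 2 - 1) / qm := by
      rw [eq_div_iff hqm1] at e1
      rw [eq_div_iff hqm0]
      linear_combination -e1
    have e2 := heven 2 ⟨1, rfl⟩ (by norm_num)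
    norm_num [hf1, hf2] at e2
    have hf3 : f 3 = ((((qp : ℂ) + 1) * ((qm : ℂ) + 1) * (γ ^ 2 - 1)) / ((qp : ℂ) * qm) + 1) * γ := by
      rw [eq_div_iff hqp1] at e2
      field_simp at e2 ⊢
      linear_combination -e2
    refine ⟨?_, h0, hf1, hf2, hf3⟩
    intro n
    rcases Nat.even_or_odd n with he | ho
    · have r1 := hodd (n + 1) he.add_one
      have r2 := heven (n + 2) (he.add even_two) (by omega)
      have r3 := hodd (n + 3) ((he.add even_two).add_one)
      simp only [Nat.add_sub_cancel, show n + 1 + 1 = n + 2 from by ring,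
        show n + 2 + 1 = n + 3 from by ring, show n + 3 + 1 = n + 4 from by ring,
        show n + 2 - 1 = n + 1 from by omega, show n + 3 - 1 = n + 2 from by omega] at r1 r2 r3
      rw [eq_div_iff hqm1] at r1 r3
      rw [eq_div_iff hqp1] at r2
      linear_combination -r1 - (qp : ℂ) * r3 - ((qm : ℂ) + 1) * γ * r2
    · have r1 := heven (n + 1) ho.add_one (by omega)
      have r2 := hodd (n + 2) (ho.add_even even_two)
      have r3 := heven (n + 3) ((ho.add_even even_two).add_one) (by omega)
      simp only [Nat.add_sub_cancel, show n + 1 + 1 = n + 2 from by ring,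
        show n + 2 + 1 = n + 3 from by ring, show n + 3 + 1 = n + 4 from by ring,
        show n + 2 - 1 = n + 1 from by omega, show n + 3 - 1 = n + 2 from by omega] at r1 r2 r3
      rw [eq_div_iff hqp1] at r1 r3
      rw [eq_div_iff hqm1] at r2
      linear_combination -r1 - (qm : ℂ) * r3 - ((qp : ℂ) + 1) * γ * r2
end
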